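/- Let L be a purely relational language all of whose relation symbols are unary, and let M be an infinite L-structure that is not semantically ∅-rigid. Then for every n ∈ ℕ there exists A ⊆ M with |A| = n such that M is not semantically A-rigid; consequently deg^{∀-sem}_rig(M) = ∞ and deg^{∀-synt}_rig(M) = ∞. -/

import Mathlib

/-! In a unary relational language, a permutation is an automorphism as soon as it preserves
each unary relation pointwise. If an automorphism `g` moves `b`, then `b` and `g b` satisfy the same
unary relations, so the transposition of `b` and `g b` is a nontrivial automorphism supported on two
points. In an infinite structure it fixes pointwise sets `A` of every finite size, none of which
therefore makes `M` semantically (let alone syntactically) rigid. -/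

open FirstOrder Language Set

universe u v w

variable (L : FirstOrder.Language.{u, v}) (M : Type w) [L.Structure M]

/-- The definable closure of `A`: the set of `b` such that `{b}` is definable
with parameters from `A`. -/
def dcl (A : Set M) : Set M := {b : M | A.Definable₁ L ({b} : Set M)}

/-- `M` is semantically `A`-rigid if every automorphism fixing `A` pointwise is the identity. -/
def SemRigid (A : Set M) : Prop :=
  ∀ f : M ≃[L] M, (∀ a ∈ A, f a = a) → ∀ x : M, f x = x

/-- `M` is syntactically `A`-rigid if `dcl(A) = M`. -/
def SyntRigid (A : Set M) : Prop := dcl L M A = Set.univ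

/-- The ∀-semantic degree of rigidity. -/
noncomputable def degForallSem : ℕ∞ :=
  sInf {n : ℕ∞ | ∃ m : ℕ, n = m ∧ ∀ A : Finset M, A.card = m → SemRigid L M ↑A}

/-- The ∃-semantic degree of rigidity. -/
noncomputable def degExistsSem : ℕ∞ :=
  sInf {n : ℕ∞ | ∃ m : ℕ, n = m ∧ ∃ A : Finset M, A.card = m ∧ SemRigid L M ↑A}

/-- The ∀-syntactic degree of rigidity. -/
noncomputable def degForallSynt : ℕ∞ :=
  sInf {n : ℕ∞ | ∃ m : ℕ, n = m ∧ ∀ A : Finset M, A.card = m → SyntRigid L M ↑A}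

/-- The ∃-syntactic degree of rigidity. -/
noncomputable def degExistsSynt : ℕ∞ :=
  sInf {n : ℕ∞ | ∃ m : ℕ, n = m ∧ ∃ A : Finset M, A.card = m ∧ SyntRigid L M ↑A}

variable {L M}

theorem Set.Definable₁.map_eq_self_of_singleton {A : Set M} (f : M ≃[L] M)
    (hf : ∀ a ∈ A, f a = a) {b : M} (hb : A.Definable₁ L ({b} : Set M)) : f b = b := by
  rw [Set.Definable₁, Set.definable_iff_exists_formula_sum] at hb
  obtain ⟨φ, hφ⟩ := hb
  have hparams : Sum.elim ((↑) : A → M) (fun _ : Fin 1 => f b)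
      = f ∘ Sum.elim ((↑) : A → M) (fun _ : Fin 1 => b) := by
    funext i
    cases i with
    | inl a => exact (hf a a.2).symm
    | inr j => rfl
  have hb_mem : (fun _ : Fin 1 => b) ∈ {x : Fin 1 → M | x 0 ∈ ({b} : Set M)} := rfl
  have hfb_mem : (fun _ : Fin 1 => f b) ∈ {v : Fin 1 → M | φ.Realize (Sum.elim (↑) v)} := by
    rw [hφ] at hb_mem
    simpa only [Set.mem_ofPred_eq, hparams, StrongHomClass.realize_formula] using hb_mem
  rw [← hφ] at hfb_mem
  exact hfb_mem

theorem SemRigid.of_syntRigid {A : Set M} (h : SyntRigid L M A) : SemRigid L M A :=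
  fun f hf x => (h ▸ Set.mem_univ x : x ∈ dcl L M A).map_eq_self_of_singleton f hf

theorem not_syntRigid_of_not_semRigid {A : Set M} (h : ¬ SemRigid L M A) : ¬ SyntRigid L M A :=
  mt SemRigid.of_syntRigid h

theorem relMap_swap_iff [DecidableEq M] {b c : M}
    (hbc : ∀ r : L.Relations 1,
      Structure.RelMap r (fun _ : Fin 1 => c) ↔ Structure.RelMap r (fun _ : Fin 1 => b))
    (r : L.Relations 1) (x : M) :
    Structure.RelMap r (fun _ : Fin 1 => Equiv.swap b c x)
      ↔ Structure.RelMap r (fun _ : Fin 1 => x) := by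
  rcases eq_or_ne x b with rfl | hxb
  · rw [Equiv.swap_apply_left]; exact hbc r
  rcases eq_or_ne x c with rfl | hxc
  · rw [Equiv.swap_apply_right]; exact (hbc r).symm
  rw [Equiv.swap_apply_of_ne_of_ne hxb hxc]

theorem relMap_map_iff (g : M ≃[L] M) (r : L.Relations 1) (x : M) :
    Structure.RelMap r (fun _ : Fin 1 => g x) ↔ Structure.RelMap r (fun _ : Fin 1 => x) :=
  StrongHomClass.map_rel g r (fun _ : Fin 1 => x)

section Unary

variable [L.IsRelational] (hUnary : ∀ k : ℕ, k ≠ 1 → IsEmpty (L.Relations k))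
include hUnary

def equivOfUnaryRelMap (σ : M ≃ M)
    (hσ : ∀ (r : L.Relations 1) (x : M),
      Structure.RelMap r (fun _ : Fin 1 => σ x) ↔ Structure.RelMap r (fun _ : Fin 1 => x)) :
    M ≃[L] M :=
  { σ with
    map_fun' := fun f => isEmptyElim f
    map_rel' := by
      intro n r x
      by_cases hn : n = 1
      · subst hn
        have hx : x = fun _ : Fin 1 => x 0 := funext fun i => by rw [Subsingleton.elim i 0]
        rw [hx]
        exact hσ r (x 0)
      · exact ((hUnary n hn).false r).elim }

@[simp]
theorem equivOfUnaryRelMap_apply (σ : M ≃ M) (hσ) (x : M) :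
    equivOfUnaryRelMap hUnary σ hσ x = σ x := rfl

noncomputable def swapMapEquiv [DecidableEq M] (g : M ≃[L] M) (b : M) : M ≃[L] M :=
  equivOfUnaryRelMap hUnary (Equiv.swap b (g b)) (relMap_swap_iff fun r => relMap_map_iff g r b)

end Unary

theorem exists_card_eq_not_semRigid [Infinite M] (f : M ≃[L] M) {S : Set M} (hS : S.Finite)
    (hfS : ∀ x ∉ S, f x = x) {b : M} (hb : f b ≠ b) (n : ℕ) :
    ∃ A : Finset M, A.card = n ∧ ¬ SemRigid L M ↑A := by
  obtain ⟨A, hAS, hcard⟩ := hS.infinite_compl.exists_subset_card_eq n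
  exact ⟨A, hcard, fun hrig => hb (hrig f (fun a ha => hfS a (hAS ha)) b)⟩

theorem degForallSem_eq_top (h : ∀ n : ℕ, ∃ A : Finset M, A.card = n ∧ ¬ SemRigid L M ↑A) :
    degForallSem L M = ⊤ := by
  rw [degForallSem, sInf_eq_top]
  rintro _ ⟨m, -, hm⟩
  obtain ⟨A, hcard, hA⟩ := h m
  exact (hA (hm A hcard)).elim

theorem degForallSynt_eq_top (h : ∀ n : ℕ, ∃ A : Finset M, A.card = n ∧ ¬ SyntRigid L M ↑A) :
    degForallSynt L M = ⊤ := by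
  rw [degForallSynt, sInf_eq_top]
  rintro _ ⟨m, -, hm⟩
  obtain ⟨A, hcard, hA⟩ := h m
  exact (hA (hm A hcard)).elim

/-- An infinite structure in a unary relational language that is not semantically
∅-rigid fails to be semantically `A`-rigid for sets `A` of every finite cardinality;
consequently its ∀-semantic and ∀-syntactic degrees of rigidity are `∞`. -/
theorem stmt_9 [L.IsRelational] (hUnary : ∀ k : ℕ, k ≠ 1 → IsEmpty (L.Relations k))
    [Infinite M] (hnotrigid : ¬ SemRigid L M (∅ : Set M)) :
    (∀ n : ℕ, ∃ A : Finset M, A.card = n ∧ ¬ SemRigid L M ↑A) ∧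
    degForallSem L M = ⊤ ∧ degForallSynt L M = ⊤ := by
  classical
  obtain ⟨g, -, b, hb⟩ : ∃ g : M ≃[L] M, (∀ a ∈ (∅ : Set M), g a = a) ∧ ∃ b, g b ≠ b := by
    simpa only [SemRigid, not_forall, exists_prop] using hnotrigid
  have hswap_b : swapMapEquiv hUnary g b b ≠ b := by
    simpa only [swapMapEquiv, equivOfUnaryRelMap_apply, Equiv.swap_apply_left] using hb
  have hswap_fix : ∀ x ∉ ({b, g b} : Set M), swapMapEquiv hUnary g b x = x := by
    intro x hx
    simp only [Set.mem_insert_iff, Set.mem_singleton_iff, not_or] at hx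
    exact Equiv.swap_apply_of_ne_of_ne hx.1 hx.2
  have hsem := exists_card_eq_not_semRigid _ (Set.toFinite _) hswap_fix hswap_b
  refine ⟨hsem, degForallSem_eq_top hsem, degForallSynt_eq_top fun n => ?_⟩
  obtain ⟨A, hcard, hA⟩ := hsem n
  exact ⟨A, hcard, not_syntRigid_of_not_semRigid hA⟩
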